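/- arXiv:1810.09063 — 2 statements merged into one kernel-verified Lean document; each statement's English description precedes it below -/
import Mathlib

section
/- Let h ≥ 0, p, r > 0, μ̄ > 0 and c ≤ 0. The function G(z) := F₀(h + r z² + p(z − c)²) + μ̄ (z⁻ + c)² attains its infimum over ℝ, and every minimiser z* of G satisfies c ≤ z* ≤ (p/(r+p)) c. -/
/-!
`φ` is glued from `x`, `2√x - 1` and `εx + ε⁻¹ - 1`, which agree at the break points `1` and `ε⁻²`,
so it is continuous and strictly increasing, and hence so is `F₀`. Write
`G z = F₀ (Q z) + μ̄ P z` with `Q z = h + r z² + p (z - c)²` and `P z = (z⁻ + c)²`.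
For `z < c ≤ 0` we have `Q z > Q c` and `P z ≥ 0 = P c`, so `G z > G c`. The parabola `Q` has its
vertex at `z₀ = p c / (r + p) ∈ [c, 0]` and `P` is nondecreasing on `[c, ∞)`, so `G z > G z₀`
for `z > z₀`. Hence every minimiser lies in `[c, z₀]`, and one exists because `G` attains its
minimum on this compact interval.
-/

open Set

noncomputable def phi (ε x : ℝ) : ℝ :=
  if x ≤ 1 then x else if x < (ε ^ 2)⁻¹ then 2 * Real.sqrt x - 1 else ε * x + ε⁻¹ - 1

section phi

variable {ε : ℝ}

lemma one_lt_inv_sq (hε0 : 0 < ε) (hε1 : ε < 1) : 1 < (ε ^ 2)⁻¹ :=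
  one_lt_inv₀ (pow_pos hε0 2) |>.mpr (pow_lt_one₀ hε0.le hε1 two_ne_zero)

lemma phi_eqOn_Iic : EqOn (phi ε) id (Iic 1) := fun _ hx => if_pos hx

lemma phi_eqOn_Icc (hε0 : 0 < ε) (hε1 : ε < 1) :
    EqOn (phi ε) (fun x => 2 * Real.sqrt x - 1) (Icc 1 (ε ^ 2)⁻¹) := by
  rintro x ⟨hx1, hx2⟩
  rcases hx1.eq_or_lt with rfl | hx1
  · norm_num [phi]
  rcases hx2.lt_or_eq with hx2 | rfl
  · simp [phi, hx1.not_ge, hx2]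
  · have : Real.sqrt (ε ^ 2)⁻¹ = ε⁻¹ := by rw [Real.sqrt_inv, Real.sqrt_sq hε0.le]
    simp only [phi, (one_lt_inv_sq hε0 hε1).not_ge, lt_irrefl, if_false, this]
    field_simp
    ring

lemma phi_eqOn_Ici (hε0 : 0 < ε) (hε1 : ε < 1) :
    EqOn (phi ε) (fun x => ε * x + ε⁻¹ - 1) (Ici (ε ^ 2)⁻¹) := by
  intro x hx
  have hx1 : ¬x ≤ 1 := ((one_lt_inv_sq hε0 hε1).trans_le hx).not_ge
  simp [phi, hx1, not_lt.mpr (mem_Ici.mp hx)]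

lemma phi_strictMono (hε0 : 0 < ε) (hε1 : ε < 1) : StrictMono (phi ε) := by
  have h1 := (one_lt_inv_sq hε0 hε1).le
  have hmid : StrictMonoOn (phi ε) (Icc 1 (ε ^ 2)⁻¹) := by
    refine StrictMonoOn.congr (fun x hx y hy hxy => ?_) (phi_eqOn_Icc hε0 hε1).symm
    have := Real.strictMonoOn_sqrt (zero_le_one.trans hx.1) (zero_le_one.trans hy.1) hxy
    linarith
  have htail : StrictMonoOn (phi ε) (Ici (ε ^ 2)⁻¹) :=
    ((strictMono_mul_left_of_pos hε0).add_const _ |>.add_const (-1) |>.strictMonoOn _).congr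
      (phi_eqOn_Ici hε0 hε1).symm
  refine StrictMonoOn.Iic_union_Ici (a := 1)
    ((strictMono_id.strictMonoOn _).congr phi_eqOn_Iic.symm) ?_
  rw [← Icc_union_Ici_eq_Ici h1]
  exact hmid.union htail (isGreatest_Icc h1) isLeast_Ici

lemma phi_continuous (hε0 : 0 < ε) (hε1 : ε < 1) : Continuous (phi ε) := by
  have h1 := (one_lt_inv_sq hε0 hε1).le
  rw [← continuousOn_univ, ← Iic_union_Ici (a := 1), ← Icc_union_Ici_eq_Ici h1]
  refine (continuousOn_id.congr phi_eqOn_Iic).union_of_isClosed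
    (ContinuousOn.union_of_isClosed ?_ ?_ isClosed_Icc isClosed_Ici) isClosed_Iic
    (isClosed_Icc.union isClosed_Ici)
  · exact ContinuousOn.congr (by fun_prop) (phi_eqOn_Icc hε0 hε1)
  · exact ContinuousOn.congr (by fun_prop) (phi_eqOn_Ici hε0 hε1)

end phi

lemma strictMono_sum_mul_comp_mul {ι : Type*} [Fintype ι] [Nonempty ι] {f : ℝ → ℝ}
    (hf : StrictMono f) {a b : ι → ℝ} (ha : ∀ j, 0 < a j) (hb : ∀ j, 0 < b j) :
    StrictMono fun q => ∑ j, a j * f (b j * q) := fun _ _ hq =>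
  Finset.sum_lt_sum_of_nonempty Finset.univ_nonempty fun j _ =>
    mul_lt_mul_of_pos_left (hf (mul_lt_mul_of_pos_left hq (hb j))) (ha j)

lemma mem_Icc_of_forall_le {α β : Type*} [LinearOrder α] [Preorder β] {G : α → β} {a b x : α}
    (hleft : ∀ z < a, G a < G z) (hright : ∀ z, b < z → G b < G z) (hx : ∀ z, G x ≤ G z) :
    x ∈ Icc a b :=
  ⟨not_lt.1 fun h => (hleft x h).not_ge (hx a), not_lt.1 fun h => (hright x h).not_ge (hx b)⟩

lemma Continuous.exists_forall_le_of_Icc {α β : Type*} [ConditionallyCompleteLinearOrder α]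
    [TopologicalSpace α] [OrderTopology α] [LinearOrder β] [TopologicalSpace β]
    [OrderClosedTopology β] {G : α → β} {a b : α} (hG : Continuous G) (hab : a ≤ b)
    (hleft : ∀ z < a, G a ≤ G z) (hright : ∀ z, b < z → G b ≤ G z) : ∃ x, ∀ z, G x ≤ G z := by
  obtain ⟨x, -, hmin⟩ := isCompact_Icc.exists_isMinOn (nonempty_Icc.2 hab) hG.continuousOn
  refine ⟨x, fun z => ?_⟩
  rcases lt_or_ge z a with hza | haz
  · exact (hmin ⟨le_rfl, hab⟩).trans (hleft z hza)
  rcases le_or_gt z b with hzb | hbz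
  · exact hmin ⟨haz, hzb⟩
  · exact (hmin ⟨hab, le_rfl⟩).trans (hright z hbz)

noncomputable def secondBestObjective (F : ℝ → ℝ) (h p r μ c z : ℝ) : ℝ :=
  F (h + r * z ^ 2 + p * (z - c) ^ 2) + μ * (max (-z) 0 + c) ^ 2

section secondBest

variable {F : ℝ → ℝ} {h p r μ c z : ℝ}

lemma Continuous.secondBestObjective (hF : Continuous F) :
    Continuous (secondBestObjective F h p r μ c) := by
  unfold _root_.secondBestObjective
  fun_prop

lemma le_div_add_mul_self (hp : 0 < p) (hr : 0 ≤ r) (hc : c ≤ 0) : c ≤ p / (r + p) * c := by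
  rw [div_mul_eq_mul_div, le_div_iff₀ (by positivity)]
  nlinarith

lemma quadratic_vertex_form (hrp : r + p ≠ 0) :
    h + r * z ^ 2 + p * (z - c) ^ 2 =
      h + r * (p / (r + p) * c) ^ 2 + p * (p / (r + p) * c - c) ^ 2
        + (r + p) * (z - p / (r + p) * c) ^ 2 := by
  field_simp
  ring

lemma monotoneOn_sq_max_neg_add (hc : c ≤ 0) :
    MonotoneOn (fun z : ℝ => (max (-z) 0 + c) ^ 2) (Ici c) := by
  intro x hx y _ hxy
  have hyx : max (-y) 0 + c ≤ max (-x) 0 + c := by gcongr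
  have hx0 : max (-x) 0 + c ≤ 0 := by
    have : max (-x) 0 ≤ -c := max_le (by linarith [mem_Ici.1 hx]) (by linarith)
    linarith
  dsimp only
  nlinarith

lemma secondBestObjective_lt_of_lt (hF : StrictMono F) (hp : 0 < p) (hr : 0 ≤ r) (hμ : 0 ≤ μ)
    (hc : c ≤ 0) (hz : z < c) :
    secondBestObjective F h p r μ c c < secondBestObjective F h p r μ c z := by
  have hsq : c ^ 2 ≤ z ^ 2 := by nlinarith
  have hQ : h + r * c ^ 2 + p * (c - c) ^ 2 < h + r * z ^ 2 + p * (z - c) ^ 2 := by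
    have : 0 < p * (z - c) ^ 2 := by have := sub_ne_zero.2 hz.ne; positivity
    nlinarith
  have hpen : max (-c) 0 + c = 0 := by rw [max_eq_left (by linarith)]; ring
  refine add_lt_add_of_lt_of_le (hF hQ) (mul_le_mul_of_nonneg_left ?_ hμ)
  rw [hpen, zero_pow two_ne_zero]
  positivity

lemma secondBestObjective_lt_of_vertex_lt (hF : StrictMono F) (hp : 0 < p) (hr : 0 ≤ r)
    (hμ : 0 ≤ μ) (hc : c ≤ 0) (hz : p / (r + p) * c < z) :
    secondBestObjective F h p r μ c (p / (r + p) * c) < secondBestObjective F h p r μ c z := by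
  have hrp : 0 < r + p := by linarith
  have hQ := quadratic_vertex_form (h := h) (z := z) (c := c) hrp.ne'
  have : 0 < (r + p) * (z - p / (r + p) * c) ^ 2 := by
    have := sub_ne_zero.2 hz.ne'; positivity
  have hc₀ := le_div_add_mul_self hp hr hc
  refine add_lt_add_of_lt_of_le (hF (by linarith)) (mul_le_mul_of_nonneg_left ?_ hμ)
  exact monotoneOn_sq_max_neg_add hc hc₀ (hc₀.trans hz.le) hz.le

end secondBest

theorem second_best_minimiser_location_general
    (d : ℕ) (hd : 1 ≤ d) (σ lam : Fin d → ℝ)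
    (hσ : ∀ j, 0 < σ j) (hlam : ∀ j, 0 < lam j)
    (ε : ℝ) (hε : ε ∈ Set.Ioo (0 : ℝ) 1)
    (φ : ℝ → ℝ)
    (hφ : φ = fun x =>
      if x ≤ 1 then x else if x < (ε ^ 2)⁻¹ then 2 * Real.sqrt x - 1 else ε * x + ε⁻¹ - 1)
    (F₀ : ℝ → ℝ) (hF₀ : F₀ = fun q => ∑ j, (σ j) ^ 2 / lam j * φ (lam j * q))
    (h p r μbar c : ℝ) (hp : 0 < p) (hr : 0 < r) (hμbar : 0 < μbar)
    (hc : c ≤ 0)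
    (G : ℝ → ℝ)
    (hG : G = fun z =>
      F₀ (h + r * z ^ 2 + p * (z - c) ^ 2) + μbar * (max (-z) 0 + c) ^ 2) :
    (∃ zstar : ℝ, ∀ z : ℝ, G zstar ≤ G z) ∧
      (∀ zstar : ℝ, (∀ z : ℝ, G zstar ≤ G z) → c ≤ zstar ∧ zstar ≤ (p / (r + p)) * c) := by
  obtain ⟨hε0, hε1⟩ := hε
  have : Nonempty (Fin d) := ⟨⟨0, hd⟩⟩
  obtain rfl : φ = phi ε := hφ
  obtain rfl : G = secondBestObjective F₀ h p r μbar c := hG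
  have hF₀mono : StrictMono F₀ := hF₀ ▸ strictMono_sum_mul_comp_mul (phi_strictMono hε0 hε1)
    (fun j => div_pos (pow_pos (hσ j) 2) (hlam j)) hlam
  have hF₀cont : Continuous F₀ := by
    have := phi_continuous hε0 hε1
    rw [hF₀]
    fun_prop
  have hleft z (hz : z < c) :=
    secondBestObjective_lt_of_lt (h := h) hF₀mono hp hr.le hμbar.le hc hz
  have hright z (hz : p / (r + p) * c < z) :=
    secondBestObjective_lt_of_vertex_lt (h := h) hF₀mono hp hr.le hμbar.le hc hz
  exact ⟨hF₀cont.secondBestObjective.exists_forall_le_of_Icc (le_div_add_mul_self hp hr.le hc)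
      (fun z hz => (hleft z hz).le) (fun z hz => (hright z hz).le),
    fun x hx => mem_Icc_of_forall_le hleft hright hx⟩

/-- For `c ≤ 0`, the function
`G(z) = F₀(h + rz² + p(z−c)²) + μ̄(z⁻+c)²` attains its infimum over `ℝ`, and every
minimiser `z*` satisfies `c ≤ z* ≤ (p/(r+p)) c`. -/
theorem second_best_minimiser_location
    (d : ℕ) (hd : 1 ≤ d) (σ lam : Fin d → ℝ)
    (hσ : ∀ j, 0 < σ j) (hlam : ∀ j, 0 < lam j)
    (ε : ℝ) (hε : ε ∈ Set.Ioo (0 : ℝ) 1)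
    (φ : ℝ → ℝ)
    (hφ : φ = fun x =>
      if x ≤ 1 then x else if x < (ε ^ 2)⁻¹ then 2 * Real.sqrt x - 1 else ε * x + ε⁻¹ - 1)
    (F₀ : ℝ → ℝ) (hF₀ : F₀ = fun q => ∑ j, (σ j) ^ 2 / lam j * φ (lam j * q))
    (h p r μbar c : ℝ) (hh : 0 ≤ h) (hp : 0 < p) (hr : 0 < r) (hμbar : 0 < μbar)
    (hc : c ≤ 0)
    (G : ℝ → ℝ)
    (hG : G = fun z =>
      F₀ (h + r * z ^ 2 + p * (z - c) ^ 2) + μbar * (max (-z) 0 + c) ^ 2) :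
    (∃ zstar : ℝ, ∀ z : ℝ, G zstar ≤ G z) ∧
      (∀ zstar : ℝ, (∀ z : ℝ, G zstar ≤ G z) → c ≤ zstar ∧ zstar ≤ (p / (r + p)) * c) :=
  second_best_minimiser_location_general d hd σ lam hσ hlam ε hε φ hφ F₀ hF₀ h p r μbar c hp hr
    hμbar hc G hG
end

section
/- Let T > 0, δ ≤ 0, h ≥ 0, p, r > 0, μ̄ > 0, ρ := rp/(r+p), s := ∑_{j=1}^d σ_j² and λ̄ := max_{1 ≤ j ≤ d} λ_j, and assume h + r δ² T² ≤ 1/λ̄. For t ∈ [0,T] define m_FB(t) := (1/2) μ̄ (δ⁻)² (T−t)² + H_v(−h − ρ δ² (T−t)²) and m_SB(t) := (1/2) μ̄ δ² (T−t)² − (1/2) inf_{z ∈ ℝ} { F₀(h + r z² + p(z − δ(T−t))²) + μ̄ (z⁻ + δ(T−t))² }. Then the informational rent satisfies ∫_0^T (m_FB(t) − m_SB(t)) dt = ( δ² T³ r² / (6(p+r)) ) · ( 1/s + (p+r)/μ̄ )^{−1}. -/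
/-!
In the regime `h + r δ² T² ≤ 1 / λ̄` every argument `λ_j q` that matters stays below `1`, where
`φ` is the identity, so `F₀ q = s q`; for larger `q` one still has `F₀ q ≥ s / λ̄`, which is too
expensive to be optimal. Likewise the first-best volatility problem is solved by `b = 1`, giving
`H_v(γ) = γ s / 2`. With `c = δ (T - t) ≤ 0` the second-best problem becomes the minimisation of
`s r z² + (s p + μ̄) (z - c)²`, whose minimum is `a b / (a + b) · c²` with `a = s r`,
`b = s p + μ̄` (the parallel sum of `a` and `b`), attained at `z = b c / (a + b) ≤ 0`. Hence `m_FB - m_SB` is a constant multiple of `(T - t)²`, and integrating gives the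
formula.
-/

open Set

section ParallelSum

variable {a b : ℝ}

lemma parallel_sum_le_left (hab : 0 < a + b) : a * b / (a + b) ≤ a := by
  rw [div_le_iff₀ hab]; nlinarith [sq_nonneg a]

lemma parallel_sum_le_right (hab : 0 < a + b) : a * b / (a + b) ≤ b := by
  rw [div_le_iff₀ hab]; nlinarith [sq_nonneg b]

lemma parallel_sum_mul_sq_le (hab : 0 < a + b) (c w : ℝ) :
    a * b / (a + b) * c ^ 2 ≤ a * w ^ 2 + b * (w - c) ^ 2 := by
  rw [div_mul_eq_mul_div, div_le_iff₀ hab]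
  nlinarith [sq_nonneg (a * w + b * (w - c))]

lemma parallel_sum_mul_sq_eq (hab : 0 < a + b) (c : ℝ) :
    a * (b / (a + b) * c) ^ 2 + b * (b / (a + b) * c - c) ^ 2 = a * b / (a + b) * c ^ 2 := by
  field_simp
  ring

end ParallelSum

lemma mul_le_one_of_le_one_div {lam L q : ℝ} (hlam : 0 < lam) (hL : lam ≤ L) (hq : q ≤ 1 / L) :
    lam * q ≤ 1 := by
  rw [← le_div_iff₀' hlam]
  exact hq.trans (one_div_le_one_div_of_le hlam hL)

noncomputable def phiPiecewise (ε x : ℝ) : ℝ :=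
  if x ≤ 1 then x else if x < (ε ^ 2)⁻¹ then 2 * Real.sqrt x - 1 else ε * x + ε⁻¹ - 1

lemma phiPiecewise_of_le_one (ε : ℝ) {x : ℝ} (hx : x ≤ 1) : phiPiecewise ε x = x := if_pos hx

lemma min_one_le_phiPiecewise {ε : ℝ} (hε0 : 0 < ε) (hε1 : ε ≤ 1) (x : ℝ) :
    min x 1 ≤ phiPiecewise ε x := by
  unfold phiPiecewise
  split_ifs with hx1 hxε
  · exact min_le_left x 1
  · have : 1 < Real.sqrt x := Real.lt_sqrt_of_sq_lt (by linarith)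
    linarith [min_le_right x 1]
  · have hεx : ε⁻¹ ≤ ε * x := by
      calc ε⁻¹ = ε * (ε ^ 2)⁻¹ := by field_simp
        _ ≤ ε * x := by gcongr; exact not_lt.1 hxε
    linarith [min_le_right x 1, one_le_inv₀ hε0 |>.2 hε1]

noncomputable def weightedCost {ι : Type*} [Fintype ι] (σ lam : ι → ℝ) (g : ℝ → ℝ) (q : ℝ) : ℝ :=
  ∑ j, σ j ^ 2 / lam j * g (lam j * q)

section WeightedCost

variable {ι : Type*} [Fintype ι] {σ lam : ι → ℝ} {g : ℝ → ℝ} {L : ℝ}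

lemma weightedCost_eq_of_le_one_div (hg : ∀ x ≤ 1, g x = x) (hlam : ∀ j, 0 < lam j)
    (hL : ∀ j, lam j ≤ L) {q : ℝ} (hq : q ≤ 1 / L) :
    weightedCost σ lam g q = (∑ j, σ j ^ 2) * q := by
  rw [weightedCost, Finset.sum_mul]
  refine Finset.sum_congr rfl fun j _ => ?_
  rw [hg _ (mul_le_one_of_le_one_div (hlam j) (hL j) hq)]
  field_simp [(hlam j).ne']

lemma mul_min_le_weightedCost (hg : ∀ x, min x 1 ≤ g x) (hlam : ∀ j, 0 < lam j)
    (hL : ∀ j, lam j ≤ L) (q : ℝ) : (∑ j, σ j ^ 2) * min q (1 / L) ≤ weightedCost σ lam g q := by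
  rw [weightedCost, Finset.sum_mul]
  refine Finset.sum_le_sum fun j _ => ?_
  have hj := hlam j
  calc σ j ^ 2 * min q (1 / L) ≤ σ j ^ 2 * min q (1 / lam j) := by
        gcongr ?_ * min _ ?_; exact one_div_le_one_div_of_le hj (hL j)
    _ = σ j ^ 2 * (min (lam j * q) 1 / lam j) := by
        rw [← min_div_div_right hj.le, mul_div_cancel_left₀ _ hj.ne']
    _ = σ j ^ 2 / lam j * min (lam j * q) 1 := by ring
    _ ≤ σ j ^ 2 / lam j * g (lam j * q) := by gcongr; exact hg _

end WeightedCost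

lemma mul_one_sub_le_one_div_sub_one_div {b lam κ : ℝ} (hb0 : 0 < b) (hb1 : b ≤ 1) (hlam : 0 < lam)
    (hκ : κ * lam ≤ 1) : κ * (1 - b) ≤ (1 / b - 1) / lam := by
  have h1b : 0 ≤ 1 - b := sub_nonneg.2 hb1
  calc κ * (1 - b) ≤ (1 - b) / lam := by
        rw [le_div_iff₀ hlam]; nlinarith
    _ ≤ (1 / b - 1) / lam := by
        gcongr ?_ / _
        rw [show 1 / b - 1 = (1 - b) / b by field_simp]
        exact le_div_self h1b hb0 hb1

lemma isLeast_at_one_of_neg_le_one_div {ι : Type*} [Fintype ι] {σ lam : ι → ℝ} {ε γ L : ℝ}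
    (hε0 : 0 < ε) (hε1 : ε ≤ 1) (hlam : ∀ j, 0 < lam j) (hL : ∀ j, lam j ≤ L)
    (hγ : -γ ≤ 1 / L) :
    IsLeast ((fun b : ι → ℝ => ∑ j, σ j ^ 2 / lam j * (1 / b j - 1) - γ * ∑ j, σ j ^ 2 * b j) ''
      {b | ∀ j, b j ∈ Icc ε 1}) (-γ * ∑ j, σ j ^ 2) := by
  refine ⟨⟨1, fun _ => ⟨hε1, le_rfl⟩, by simp⟩, ?_⟩
  rintro _ ⟨b, hb, rfl⟩
  dsimp only
  rw [Finset.mul_sum, Finset.mul_sum, ← Finset.sum_sub_distrib]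
  refine Finset.sum_le_sum fun j _ => ?_
  have key := mul_one_sub_le_one_div_sub_one_div (hε0.trans_le (hb j).1) (hb j).2 (hlam j)
    (mul_comm (-γ) _ ▸ mul_le_one_of_le_one_div (hlam j) (hL j) hγ)
  have hσ := sq_nonneg (σ j)
  calc -γ * σ j ^ 2 = σ j ^ 2 * (-γ * (1 - b j)) - γ * (σ j ^ 2 * b j) := by ring
    _ ≤ σ j ^ 2 * ((1 / b j - 1) / lam j) - γ * (σ j ^ 2 * b j) := by gcongr
    _ = σ j ^ 2 / lam j * (1 / b j - 1) - γ * (σ j ^ 2 * b j) := by ring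

lemma parallel_sum_mul_sq_le_of_nonpos {a β μ c : ℝ} (ha : 0 ≤ a) (hβ : 0 ≤ β) (hμ : 0 < μ)
    (hc : c ≤ 0) (z : ℝ) :
    a * (β + μ) / (a + (β + μ)) * c ^ 2 ≤
      a * z ^ 2 + β * (z - c) ^ 2 + μ * (max (-z) 0 + c) ^ 2 := by
  have hab : 0 < a + (β + μ) := by positivity
  rcases le_or_gt z 0 with hz | hz
  · rw [max_eq_left (neg_nonneg.2 hz)]
    calc _ ≤ a * z ^ 2 + (β + μ) * (z - c) ^ 2 := parallel_sum_mul_sq_le hab c z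
      _ = _ := by ring
  · rw [max_eq_right (by linarith)]
    have hzc : c ^ 2 ≤ (z - c) ^ 2 := by nlinarith
    calc _ ≤ (β + μ) * c ^ 2 := by gcongr; exact parallel_sum_le_right hab
      _ ≤ a * z ^ 2 + β * (z - c) ^ 2 + μ * (0 + c) ^ 2 := by
        have := mul_le_mul_of_nonneg_left hzc hβ
        nlinarith [mul_nonneg ha (sq_nonneg z)]

lemma isLeast_secondBest {F : ℝ → ℝ} {s r p μ h c Q : ℝ} (hs : 0 < s) (hr : 0 < r) (hp : 0 < p)
    (hμ : 0 < μ) (hc : c ≤ 0) (hQ : h + r * c ^ 2 ≤ Q) (hF : ∀ q ≤ Q, F q = s * q)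
    (hF_ge : ∀ q, s * min q Q ≤ F q) :
    IsLeast (range fun z => F (h + r * z ^ 2 + p * (z - c) ^ 2) + μ * (max (-z) 0 + c) ^ 2)
      (s * h + s * r * (s * p + μ) / (s * r + (s * p + μ)) * c ^ 2) := by
  set a := s * r
  set b := s * p + μ
  have hab : 0 < a + b := by positivity
  have hK : a * b / (a + b) * c ^ 2 ≤ s * (r * c ^ 2) := by
    rw [← mul_assoc]; exact mul_le_mul_of_nonneg_right (parallel_sum_le_left hab) (sq_nonneg c)
  constructor
  · set z := b / (a + b) * c
    have hz : z ≤ 0 := mul_nonpos_of_nonneg_of_nonpos (by positivity) hc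
    have hvalue :
        s * (r * z ^ 2 + p * (z - c) ^ 2) + μ * (z - c) ^ 2 = a * b / (a + b) * c ^ 2 := by
      rw [← parallel_sum_mul_sq_eq hab c]; ring
    have hq : h + r * z ^ 2 + p * (z - c) ^ 2 ≤ Q := by
      have : s * (r * z ^ 2 + p * (z - c) ^ 2) ≤ s * (r * c ^ 2) := by
        nlinarith [mul_nonneg hμ.le (sq_nonneg (z - c))]
      linarith [le_of_mul_le_mul_left this hs]
    refine ⟨z, ?_⟩
    dsimp only
    rw [hF _ hq, max_eq_left (neg_nonneg.2 hz), ← hvalue]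
    ring
  · rintro _ ⟨z, rfl⟩
    have hquad := parallel_sum_mul_sq_le_of_nonpos (mul_pos hs hr).le (mul_pos hs hp).le hμ hc z
    have hμz := mul_nonneg hμ.le (sq_nonneg (max (-z) 0 + c))
    have := hF_ge (h + r * z ^ 2 + p * (z - c) ^ 2)
    rcases min_cases (h + r * z ^ 2 + p * (z - c) ^ 2) Q with ⟨hmin, -⟩ | ⟨hmin, -⟩ <;>
      rw [hmin] at this
    · dsimp only; nlinarith
    · dsimp only; nlinarith

lemma integral_sub_sq (T : ℝ) : ∫ t in (0 : ℝ)..T, (T - t) ^ 2 = T ^ 3 / 3 := by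
  rw [intervalIntegral.integral_comp_sub_left (fun x => x ^ 2), integral_pow]
  norm_num

lemma rent_coefficient {s r p μ : ℝ} (hs : 0 < s) (hr : 0 < r) (hp : 0 < p) (hμ : 0 < μ) :
    s * r * (s * p + μ) / (s * r + (s * p + μ)) - r * p / (r + p) * s =
      r ^ 2 / (p + r) * (1 / s + (p + r) / μ)⁻¹ := by
  have : s * r + (s * p + μ) ≠ 0 := by positivity
  have : μ + s * (p + r) ≠ 0 := by positivity
  field_simp
  ring

theorem information_rent_peak_general
    (d : ℕ) (σ lam : Fin d → ℝ)
    (hσ : ∀ j, 0 < σ j) (hlam : ∀ j, 0 < lam j)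
    (ε : ℝ) (hε : ε ∈ Set.Ioo (0 : ℝ) 1)
    (B : Set (Fin d → ℝ)) (hB : B = {b | ∀ j, b j ∈ Set.Icc ε 1})
    (c₂ : (Fin d → ℝ) → ℝ)
    (hc₂ : c₂ = fun b => ∑ j, (σ j) ^ 2 / lam j * (1 / b j - 1))
    (σsq : (Fin d → ℝ) → ℝ) (hσsq : σsq = fun b => ∑ j, (σ j) ^ 2 * b j)
    (Hv : ℝ → ℝ)
    (hHv : Hv = fun γ => -(1 / 2) * sInf ((fun b => c₂ b - γ * σsq b) '' B))
    (φ : ℝ → ℝ)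
    (hφ : φ = fun x =>
      if x ≤ 1 then x else if x < (ε ^ 2)⁻¹ then 2 * Real.sqrt x - 1 else ε * x + ε⁻¹ - 1)
    (F₀ : ℝ → ℝ) (hF₀ : F₀ = fun q => ∑ j, (σ j) ^ 2 / lam j * φ (lam j * q))
    (s : ℝ) (hs : s = ∑ j, (σ j) ^ 2)
    (lamb : ℝ) (hlamb : IsGreatest (Set.range lam) lamb)
    (T δ h p r μbar ρ : ℝ) (hT : 0 < T) (hδ : δ ≤ 0)
    (hp : 0 < p) (hr : 0 < r) (hμbar : 0 < μbar) (hρ : ρ = r * p / (r + p))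
    (hsmall : h + r * δ ^ 2 * T ^ 2 ≤ 1 / lamb)
    (mFB : ℝ → ℝ)
    (hmFB : mFB = fun t =>
      (1 / 2) * μbar * (max (-δ) 0) ^ 2 * (T - t) ^ 2 + Hv (-h - ρ * δ ^ 2 * (T - t) ^ 2))
    (mSB : ℝ → ℝ)
    (hmSB : mSB = fun t =>
      (1 / 2) * μbar * δ ^ 2 * (T - t) ^ 2 -
        (1 / 2) * sInf (Set.range fun z : ℝ =>
          F₀ (h + r * z ^ 2 + p * (z - δ * (T - t)) ^ 2) +
            μbar * (max (-z) 0 + δ * (T - t)) ^ 2)) :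
    (∫ t in (0 : ℝ)..T, (mFB t - mSB t)) =
      δ ^ 2 * T ^ 3 * r ^ 2 / (6 * (p + r)) * (1 / s + (p + r) / μbar)⁻¹ := by
  obtain ⟨j₀, -⟩ := hlamb.1
  have hlam_le : ∀ j, lam j ≤ lamb := fun j => hlamb.2 ⟨j, rfl⟩
  have hs_pos : 0 < s := hs ▸ Finset.sum_pos (fun j _ => pow_pos (hσ j) 2) ⟨j₀, Finset.mem_univ _⟩
  have hHv_eq : ∀ γ, -γ ≤ 1 / lamb → Hv γ = γ * s / 2 := fun γ hγ => by
    have := isLeast_at_one_of_neg_le_one_div (σ := σ) hε.1 hε.2.le hlam hlam_le hγ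
    simp only [hHv, hc₂, hσsq, hB, this.csInf_eq, hs]
    ring
  have hF₀_eq : F₀ = weightedCost σ lam (phiPiecewise ε) := by rw [hF₀, hφ]; rfl
  have hF₀_lin : ∀ q ≤ 1 / lamb, F₀ q = s * q := fun _ hq => hF₀_eq ▸ hs ▸
    weightedCost_eq_of_le_one_div (fun _ => phiPiecewise_of_le_one ε) hlam hlam_le hq
  have hF₀_ge : ∀ q, s * min q (1 / lamb) ≤ F₀ q := hF₀_eq ▸ hs ▸
    mul_min_le_weightedCost (min_one_le_phiPiecewise hε.1 hε.2.le) hlam hlam_le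
  set K := s * r * (s * p + μbar) / (s * r + (s * p + μbar)) with hK
  have hintegrand : EqOn (fun t => mFB t - mSB t)
      (fun t => (K - ρ * s) / 2 * δ ^ 2 * (T - t) ^ 2) (uIcc 0 T) := by
    intro t ht
    rw [uIcc_of_le hT.le] at ht
    have hτ : (T - t) ^ 2 ≤ T ^ 2 := pow_le_pow_left₀ (by linarith [ht.2]) (by linarith [ht.1]) 2
    have hc : δ ^ 2 * (T - t) ^ 2 ≤ δ ^ 2 * T ^ 2 := mul_le_mul_of_nonneg_left hτ (sq_nonneg δ)
    have hρc : ρ * (δ ^ 2 * (T - t) ^ 2) ≤ r * (δ ^ 2 * T ^ 2) :=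
      mul_le_mul (hρ ▸ parallel_sum_le_left (by positivity)) hc (by positivity) hr.le
    have hFB := hHv_eq (-h - ρ * δ ^ 2 * (T - t) ^ 2) (by linarith)
    have hSB := (isLeast_secondBest (h := h) (c := δ * (T - t)) hs_pos hr hp hμbar
      (mul_nonpos_of_nonpos_of_nonneg hδ (by linarith [ht.2])) (by nlinarith) hF₀_lin
      hF₀_ge).csInf_eq
    simp only [hmFB, hmSB, hFB, hSB, max_eq_left (neg_nonneg.2 hδ)]
    ring
  have hcoef := rent_coefficient hs_pos hr hp hμbar
  rw [← hρ, ← hK] at hcoef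
  rw [intervalIntegral.integral_congr hintegrand, intervalIntegral.integral_const_mul,
    integral_sub_sq]
  linear_combination (norm := (field_simp; ring)) δ ^ 2 * T ^ 3 / 6 * hcoef

/-- During peak-load periods (`δ ≤ 0`), in the small-cost regime
`h + rδ²T² ≤ 1/λ̄`, the informational rent equals
`∫_0^T (m_FB − m_SB) = (δ²T³r²/(6(p+r))) (1/s + (p+r)/μ̄)⁻¹`. -/
theorem information_rent_peak
    (d : ℕ) (hd : 1 ≤ d) (σ lam : Fin d → ℝ)
    (hσ : ∀ j, 0 < σ j) (hlam : ∀ j, 0 < lam j)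
    (ε : ℝ) (hε : ε ∈ Set.Ioo (0 : ℝ) 1)
    (B : Set (Fin d → ℝ)) (hB : B = {b | ∀ j, b j ∈ Set.Icc ε 1})
    (c₂ : (Fin d → ℝ) → ℝ)
    (hc₂ : c₂ = fun b => ∑ j, (σ j) ^ 2 / lam j * (1 / b j - 1))
    (σsq : (Fin d → ℝ) → ℝ) (hσsq : σsq = fun b => ∑ j, (σ j) ^ 2 * b j)
    (Hv : ℝ → ℝ)
    (hHv : Hv = fun γ => -(1 / 2) * sInf ((fun b => c₂ b - γ * σsq b) '' B))
    (φ : ℝ → ℝ)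
    (hφ : φ = fun x =>
      if x ≤ 1 then x else if x < (ε ^ 2)⁻¹ then 2 * Real.sqrt x - 1 else ε * x + ε⁻¹ - 1)
    (F₀ : ℝ → ℝ) (hF₀ : F₀ = fun q => ∑ j, (σ j) ^ 2 / lam j * φ (lam j * q))
    (s : ℝ) (hs : s = ∑ j, (σ j) ^ 2)
    (lamb : ℝ) (hlamb : IsGreatest (Set.range lam) lamb)
    (T δ h p r μbar ρ : ℝ) (hT : 0 < T) (hδ : δ ≤ 0) (hh : 0 ≤ h)
    (hp : 0 < p) (hr : 0 < r) (hμbar : 0 < μbar) (hρ : ρ = r * p / (r + p))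
    (hsmall : h + r * δ ^ 2 * T ^ 2 ≤ 1 / lamb)
    (mFB : ℝ → ℝ)
    (hmFB : mFB = fun t =>
      (1 / 2) * μbar * (max (-δ) 0) ^ 2 * (T - t) ^ 2 + Hv (-h - ρ * δ ^ 2 * (T - t) ^ 2))
    (mSB : ℝ → ℝ)
    (hmSB : mSB = fun t =>
      (1 / 2) * μbar * δ ^ 2 * (T - t) ^ 2 -
        (1 / 2) * sInf (Set.range fun z : ℝ =>
          F₀ (h + r * z ^ 2 + p * (z - δ * (T - t)) ^ 2) +
            μbar * (max (-z) 0 + δ * (T - t)) ^ 2)) :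
    (∫ t in (0 : ℝ)..T, (mFB t - mSB t)) =
      δ ^ 2 * T ^ 3 * r ^ 2 / (6 * (p + r)) * (1 / s + (p + r) / μbar)⁻¹ :=
  information_rent_peak_general d σ lam hσ hlam ε hε B hB c₂ hc₂ σsq hσsq Hv hHv φ hφ F₀ hF₀ s hs
    lamb hlamb T δ h p r μbar ρ hT hδ hp hr hμbar hρ hsmall mFB hmFB mSB hmSB
end
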